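/- Let t0 > 0 and suppose (x, v, λ) with a(t) = (1/4)(∫₀ᵗ √(λ(s)) ds + c)² is a solution of the first-order system (FO) on [0, t0]. Then for every t ∈ [0, t0], the Lyapunov function E is differentiable at t and E′(t) ≤ −a(t)·θ^{1/p}·‖∇Φ(x(t))‖^{(p+1)/p}. -/

import Mathlib

/-!
Differentiating `E` along the flow, the equations for `v'` and `x'` turn `E'` into
`a' (Φ(x) - Φ(x*) - ⟪∇Φ(x), x - x*⟫) - (a')² ‖∇Φ(x)‖²`. The first term is `≤ 0` by
convexity, `(a')² = λ a`, and the algebraic equation gives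
`λ ‖∇Φ(x)‖² = θ^{1/p} ‖∇Φ(x)‖^{(p+1)/p}`.

The subtlety is at the endpoints of `[0, t0]`, where `a` is a priori differentiable only from
inside (outside `[0, t0]` it depends on values of `λ` about which nothing is known). If `∇Φ(x(t)) ≠ 0` there, `v'` has the one-sided limit `-a'(t) ∇Φ(x(t))`, so the
equation `v' + a' ∇Φ(x) = 0` at `t` forces `a` to be differentiable at `t` (otherwise
`deriv a t = 0`). If `∇Φ(x(t)) = 0` (possible only at `t0`), `x(t)` is a minimiser, so
`Φ(x(·)) - Φ(x*)` is `o(s - t)`, and it suffices that `a` stays bounded near `t`.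
-/

open Set Filter Topology Asymptotics

section Gradient

variable {F : Type*} [NormedAddCommGroup F] [InnerProductSpace ℝ F] [CompleteSpace F]
  {Φ : F → ℝ}

theorem ContDiff.continuous_gradient {n : WithTop ℕ∞} (hΦ : ContDiff ℝ n Φ) (hn : n ≠ 0) :
    Continuous (gradient Φ) :=
  (InnerProductSpace.toDual ℝ F).symm.continuous.comp (hΦ.continuous_fderiv hn)

theorem hasDerivAt_comp_of_differentiableAt {x : ℝ → F} {x' : F} {τ : ℝ}
    (hΦ : DifferentiableAt ℝ Φ (x τ)) (hx : HasDerivAt x x' τ) :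
    HasDerivAt (fun t => Φ (x t)) (inner ℝ (gradient Φ (x τ)) x') τ := by
  simpa [InnerProductSpace.toDual_apply_apply, Function.comp_def] using
    hΦ.hasGradientAt.hasFDerivAt.comp_hasDerivAt τ hx

theorem ConvexOn.sub_le_inner_gradient (hconv : ConvexOn ℝ univ Φ) {z : F}
    (hz : DifferentiableAt ℝ Φ z) (y : F) : Φ z - Φ y ≤ inner ℝ (gradient Φ z) (z - y) := by
  set φ : ℝ → ℝ := fun s => Φ (AffineMap.lineMap z y s)
  have hφ : ConvexOn ℝ univ φ := by
    simpa [φ, Function.comp_def] using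
      (hconv.comp_affineMap (AffineMap.lineMap z y)).subset (subset_univ _) convex_univ
  have hline : HasDerivAt (fun s : ℝ => AffineMap.lineMap z y s) (y - z) 0 := by
    simpa [AffineMap.lineMap_apply_module', add_comm] using
      ((hasDerivAt_id (0:ℝ)).smul_const (y - z)).const_add z
  have hφ' : HasDerivAt φ (inner ℝ (gradient Φ z) (y - z)) 0 := by
    have := hasDerivAt_comp_of_differentiableAt (Φ := Φ) (by simpa using hz) hline
    rwa [AffineMap.lineMap_apply_zero] at this
  have := hφ.le_slope_of_hasDerivAt (mem_univ 0) (mem_univ 1) one_pos hφ'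
  simp only [slope_def_field, φ, AffineMap.lineMap_apply_zero, AffineMap.lineMap_apply_one,
    sub_zero, div_one] at this
  rw [← neg_sub y z, inner_neg_right]
  linarith

theorem ConvexOn.le_of_gradient_eq_zero (hconv : ConvexOn ℝ univ Φ) {z : F}
    (hz : DifferentiableAt ℝ Φ z) (hG : gradient Φ z = 0) (y : F) : Φ z ≤ Φ y := by
  have := hconv.sub_le_inner_gradient hz y
  rwa [hG, inner_zero_left, sub_nonpos] at this

end Gradient

theorem mul_sq_eq_rpow_of_pow_mul_pow_eq {p : ℕ} (hp : 1 ≤ p) {θ l r : ℝ} (hl : 0 < l)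
    (hr : 0 ≤ r) (h : l ^ p * r ^ (p - 1) = θ) :
    l * r ^ 2 = θ ^ (1 / (p:ℝ)) * r ^ (((p:ℝ) + 1) / p) := by
  have hp' : (0:ℝ) < p := by exact_mod_cast hp
  rcases hr.eq_or_lt with rfl | hr
  · rw [Real.zero_rpow (by positivity)]; simp
  have hθ : θ ^ (1 / (p:ℝ)) = l * r ^ (((p:ℝ) - 1) / p) := by
    rw [← h, Real.mul_rpow (by positivity) (by positivity), ← Real.rpow_natCast l,
      ← Real.rpow_natCast r, ← Real.rpow_mul hl.le, ← Real.rpow_mul hr.le, Nat.cast_sub hp,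
      mul_one_div_cancel hp'.ne', Real.rpow_one, Nat.cast_one, mul_one_div]
  rw [hθ, mul_assoc, ← Real.rpow_add hr, ← Real.rpow_two]
  congr 2
  field_simp
  ring

section OneSided

variable {F : Type*} [NormedAddCommGroup F] [NormedSpace ℝ F]

theorem eq_of_hasDerivAt_of_tendsto_deriv_Ioo {f : ℝ → F} {f' e : F} {t₁ t₂ τ : ℝ}
    (hf : HasDerivAt f f' τ) (ht : t₁ < t₂) (hτ : τ ∈ Icc t₁ t₂)
    (hdiff : DifferentiableOn ℝ f (Ioo t₁ t₂))
    (hlim : Tendsto (deriv f) (𝓝[Ioo t₁ t₂] τ) (𝓝 e)) : f' = e := by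
  rcases hτ.2.lt_or_eq with hτ₂ | rfl
  · have hs : Ioo t₁ t₂ ∈ 𝓝[>] τ := Ioo_mem_nhdsGT_of_mem ⟨hτ.1, hτ₂⟩
    exact (uniqueDiffWithinAt_Ici τ).eq_deriv _ hf.hasDerivWithinAt
      (hasDerivWithinAt_Ici_of_tendsto_deriv hdiff hf.continuousAt.continuousWithinAt hs
        (hlim.mono_left (nhdsWithin_le_of_mem hs)))
  · have hs : Ioo t₁ τ ∈ 𝓝[<] τ := Ioo_mem_nhdsLT_of_mem ⟨ht, le_rfl⟩
    exact (uniqueDiffWithinAt_Iic τ).eq_deriv _ hf.hasDerivWithinAt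
      (hasDerivWithinAt_Iic_of_tendsto_deriv hdiff hf.continuousAt.continuousWithinAt hs
        (hlim.mono_left (nhdsWithin_le_of_mem hs)))

theorem hasDerivAt_of_deriv_add_deriv_smul_eq_zero {a a' : ℝ → ℝ} {v G : ℝ → F}
    {t₁ t₂ τ : ℝ} (ht : t₁ < t₂) (hτ : τ ∈ Icc t₁ t₂)
    (ha : ∀ t ∈ Icc t₁ t₂, HasDerivWithinAt a (a' t) (Icc t₁ t₂) t)
    (ha' : ContinuousWithinAt a' (Icc t₁ t₂) τ) (hG : ContinuousWithinAt G (Icc t₁ t₂) τ)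
    (hv : ∀ t ∈ Icc t₁ t₂, DifferentiableAt ℝ v t)
    (heq : ∀ t ∈ Icc t₁ t₂, deriv v t + deriv a t • G t = 0)
    (hGτ : G τ ≠ 0) (ha'τ : a' τ ≠ 0) : HasDerivAt a (a' τ) τ := by
  have hv' : ∀ t ∈ Ioo t₁ t₂, deriv v t = -(a' t • G t) := fun t ht => by
    have := heq t (Ioo_subset_Icc_self ht)
    rw [((ha t (Ioo_subset_Icc_self ht)).hasDerivAt (Icc_mem_nhds ht.1 ht.2)).deriv] at this
    exact eq_neg_of_add_eq_zero_left this
  have hlim : Tendsto (deriv v) (𝓝[Ioo t₁ t₂] τ) (𝓝 (-(a' τ • G τ))) :=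
    ((ha'.smul hG).neg.tendsto.mono_left (nhdsWithin_mono _ Ioo_subset_Icc_self)).congr'
      (eventually_nhdsWithin_of_forall fun t ht => (hv' t ht).symm)
  have hvτ : deriv v τ = -(a' τ • G τ) :=
    eq_of_hasDerivAt_of_tendsto_deriv_Ioo (hv τ hτ).hasDerivAt ht hτ
      (fun t ht => (hv t (Ioo_subset_Icc_self ht)).differentiableWithinAt) hlim
  have haτ : a' τ = deriv a τ := by
    have := heq τ hτ
    rw [hvτ, neg_add_eq_zero] at this
    exact smul_left_injective ℝ hGτ this
  have hdiff : DifferentiableAt ℝ a τ := by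
    by_contra h
    exact ha'τ (haτ.trans (deriv_zero_of_not_differentiableAt h))
  exact haτ ▸ hdiff.hasDerivAt

end OneSided

theorem hasDerivAt_mul_of_isBigO_one {a g : ℝ → ℝ} {τ : ℝ}
    (ha : a =O[𝓝 τ] (fun _ => (1:ℝ))) (hg : HasDerivAt g 0 τ) (hg₀ : g τ = 0) :
    HasDerivAt (fun t => a t * g t) 0 τ := by
  rw [hasDerivAt_iff_isLittleO] at hg ⊢
  simp only [hg₀, mul_zero, sub_zero, smul_zero] at hg ⊢
  simpa using ha.mul_isLittleO hg

theorem hasDerivWithinAt_integral_Icc {F : Type*} [NormedAddCommGroup F] [NormedSpace ℝ F]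
    [CompleteSpace F] {f : ℝ → F} {t₁ t₂ t : ℝ} (hf : ContinuousOn f (Icc t₁ t₂))
    (ht : t ∈ Icc t₁ t₂) :
    HasDerivWithinAt (fun u => ∫ s in t₁..u, f s) (f t) (Icc t₁ t₂) t := by
  have : Fact (t ∈ Icc t₁ t₂) := ⟨ht⟩
  exact intervalIntegral.integral_hasDerivWithinAt_right
    (hf.mono (uIcc_subset_Icc (left_mem_Icc.2 (ht.1.trans ht.2)) ht)).intervalIntegrable
    (hf.stronglyMeasurableAtFilter_nhdsWithin measurableSet_Icc t) (hf t ht)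

/-- Right of `τ`, the integral is either monotone (while `f` stays integrable on `[t₀, t]`) or
takes the junk value `0`. -/
theorem isBigO_one_integral_nhdsGT_of_nonneg {f : ℝ → ℝ} (hf : ∀ s, 0 ≤ f s) {t₀ τ : ℝ}
    (hτ : t₀ ≤ τ) : (fun t => ∫ s in t₀..t, f s) =O[𝓝[>] τ] (fun _ => (1:ℝ)) := by
  by_cases h : ∃ w > τ, IntervalIntegrable f MeasureTheory.volume t₀ w
  · obtain ⟨w, hw, hint⟩ := h
    refine IsBigO.of_bound (∫ s in t₀..w, f s) ?_
    filter_upwards [Ioc_mem_nhdsGT hw] with t ht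
    rw [norm_one, mul_one, Real.norm_of_nonneg
      (intervalIntegral.integral_nonneg (hτ.trans ht.1.le) fun s _ => hf s)]
    exact intervalIntegral.integral_mono_interval le_rfl (hτ.trans ht.1.le) ht.2
      (Eventually.of_forall hf) hint
  · push Not at h
    refine (isBigO_zero _ _).congr' ?_ EventuallyEq.rfl
    filter_upwards [self_mem_nhdsWithin] with t ht
    exact (intervalIntegral.integral_undef (h t ht)).symm

section QuarterSquare

variable {lam a : ℝ → ℝ} {c t₀ : ℝ}
  (ha : ∀ t, a t = (1/4) * ((∫ s in (0:ℝ)..t, Real.sqrt (lam s)) + c) ^ 2)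
include ha

theorem pos_of_eq_quarter_sq_integral (hc : 0 < c) {t : ℝ} (ht : 0 ≤ t) : 0 < a t := by
  have : 0 ≤ ∫ s in (0:ℝ)..t, Real.sqrt (lam s) :=
    intervalIntegral.integral_nonneg ht fun s _ => Real.sqrt_nonneg _
  rw [ha]
  positivity

theorem hasDerivWithinAt_of_eq_quarter_sq_integral (hlam : ContinuousOn lam (Icc 0 t₀))
    (hc : 0 ≤ c) {t : ℝ} (ht : t ∈ Icc 0 t₀) :
    HasDerivWithinAt a (Real.sqrt (lam t * a t)) (Icc 0 t₀) t := by
  have hI := hasDerivWithinAt_integral_Icc hlam.sqrt ht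
  have hnonneg : 0 ≤ (∫ s in (0:ℝ)..t, Real.sqrt (lam s)) + c :=
    add_nonneg (intervalIntegral.integral_nonneg ht.1 fun s _ => Real.sqrt_nonneg _) hc
  refine ((((hI.add_const c).pow 2).const_mul (1/4)).congr_of_mem (fun u _ => ha u) ht)
    |>.congr_deriv ?_
  rw [ha t, Real.sqrt_mul' _ (by positivity), show ∀ X : ℝ, 1/4 * X ^ 2 = (X / 2) ^ 2 by
    intro X; ring, Real.sqrt_sq (by positivity)]
  push_cast
  ring

theorem isBigO_one_of_eq_quarter_sq_integral (hlam : ContinuousOn lam (Icc 0 t₀)) {τ : ℝ}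
    (hτ : τ ∈ Ioc 0 t₀) :
    a =O[𝓝 τ] (fun _ => (1:ℝ)) := by
  set I : ℝ → ℝ := fun t => ∫ s in (0:ℝ)..t, Real.sqrt (lam s)
  have hleft : I =O[𝓝[≤] τ] (fun _ => (1:ℝ)) :=
    ((hasDerivWithinAt_integral_Icc hlam.sqrt (Ioc_subset_Icc_self hτ)).continuousWithinAt
      |>.tendsto.mono_left (nhdsWithin_le_of_mem (Icc_mem_nhdsLE_of_mem hτ))).isBigO_one ℝ
  have hright : I =O[𝓝[>] τ] (fun _ => (1:ℝ)) :=
    isBigO_one_integral_nhdsGT_of_nonneg (fun s => Real.sqrt_nonneg _) hτ.1.le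
  have hI : I =O[𝓝 τ] (fun _ => (1:ℝ)) := by
    rw [← nhdsLE_sup_nhdsGT]; exact hleft.sup hright
  have := ((hI.add (isBigO_const_const c one_ne_zero _)).pow 2).const_mul_left (1/4)
  simpa [funext ha] using this

end QuarterSquare

section Lyapunov

variable {F : Type*} [NormedAddCommGroup F] [InnerProductSpace ℝ F]

theorem lyapunov_deriv_le {A α φx φs : ℝ} {G x v xs x' v' : F} (hA : 0 ≤ A) (hα : α ≠ 0)
    (hv' : v' + A • G = 0) (hx' : x' + (A / α) • (x - v) + (A ^ 2 / α) • G = 0)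
    (hconv : φx - φs ≤ inner ℝ G (x - xs)) :
    A * (φx - φs) + α * inner ℝ G x' + inner ℝ (v - xs) v' ≤ -(A ^ 2 * ‖G‖ ^ 2) := by
  rw [add_assoc] at hx'
  rw [eq_neg_of_add_eq_zero_left hv', eq_neg_of_add_eq_zero_left hx']
  have hsplit : inner ℝ G (x - xs) = inner ℝ G (x - v) + inner ℝ (v - xs) G := by
    rw [real_inner_comm G (v - xs), ← inner_add_right, sub_add_sub_cancel]
  rw [hsplit] at hconv
  simp only [inner_neg_right, inner_add_right, inner_smul_right, real_inner_self_eq_norm_sq]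
  field_simp
  nlinarith [mul_nonneg hA (sub_nonneg.2 hconv)]

variable [CompleteSpace F] {Φ : F → ℝ} {a : ℝ → ℝ} {x v : ℝ → F} {xs : F} {τ : ℝ}

theorem hasDerivAt_lyapunov {a' : ℝ} {x' v' : F} (ha : HasDerivAt a a' τ)
    (hΦ : DifferentiableAt ℝ Φ (x τ)) (hx : HasDerivAt x x' τ) (hv : HasDerivAt v v' τ) :
    HasDerivAt (fun t => a t * (Φ (x t) - Φ xs) + (1/2) * ‖v t - xs‖ ^ 2)
      (a' * (Φ (x τ) - Φ xs) + a τ * inner ℝ (gradient Φ (x τ)) x'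
        + inner ℝ (v τ - xs) v') τ := by
  refine ((ha.fun_mul ((hasDerivAt_comp_of_differentiableAt hΦ hx).sub_const (Φ xs))).fun_add
    ((hv.sub_const xs).norm_sq.const_mul (1/2))).congr_deriv ?_
  ring

theorem hasDerivAt_lyapunov_of_gradient_eq_zero (ha : a =O[𝓝 τ] (fun _ => (1:ℝ)))
    (hΦ : DifferentiableAt ℝ Φ (x τ)) (hG : gradient Φ (x τ) = 0) (hmin : Φ (x τ) = Φ xs)
    (hx : DifferentiableAt ℝ x τ) (hv : HasDerivAt v 0 τ) :
    HasDerivAt (fun t => a t * (Φ (x t) - Φ xs) + (1/2) * ‖v t - xs‖ ^ 2) 0 τ := by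
  have hΦx : HasDerivAt (fun t => Φ (x t) - Φ xs) 0 τ := by
    simpa [hG] using (hasDerivAt_comp_of_differentiableAt hΦ hx.hasDerivAt).sub_const (Φ xs)
  refine ((hasDerivAt_mul_of_isBigO_one ha hΦx (sub_eq_zero.2 hmin)).fun_add
    ((hv.sub_const xs).norm_sq.const_mul (1/2))).congr_deriv ?_
  simp

end Lyapunov

theorem stmt_4_general (d p : ℕ) (hp : 1 ≤ p)
    (Φ : EuclideanSpace ℝ (Fin d) → ℝ)
    (hconv : ConvexOn ℝ Set.univ Φ) (hsmooth : ContDiff ℝ 2 Φ)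
    (θ c t0 : ℝ) (hc : 0 < c) (ht0 : 0 < t0)
    (x0 xstar : EuclideanSpace ℝ (Fin d)) (hx0 : gradient Φ x0 ≠ 0)
    (hstar : ∀ y, Φ xstar ≤ Φ y)
    (x v : ℝ → EuclideanSpace ℝ (Fin d)) (lam : ℝ → ℝ) (a : ℝ → ℝ)
    (hlamcont : ContinuousOn lam (Set.Icc 0 t0))
    (hlampos : ∀ t ∈ Set.Icc (0:ℝ) t0, 0 < lam t)
    (ha : ∀ t, a t = (1/4) * ((∫ s in (0:ℝ)..t, Real.sqrt (lam s)) + c) ^ 2)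
    (hxdiff : ∀ t ∈ Set.Icc (0:ℝ) t0, DifferentiableAt ℝ x t)
    (hvdiff : ∀ t ∈ Set.Icc (0:ℝ) t0, DifferentiableAt ℝ v t)
    (heqv : ∀ t ∈ Set.Icc (0:ℝ) t0, deriv v t + deriv a t • gradient Φ (x t) = 0)
    (heqx : ∀ t ∈ Set.Icc (0:ℝ) t0,
      deriv x t + (deriv a t / a t) • (x t - v t)
        + ((deriv a t) ^ 2 / a t) • gradient Φ (x t) = 0)
    (halg : ∀ t ∈ Set.Icc (0:ℝ) t0, (lam t) ^ p * ‖gradient Φ (x t)‖ ^ (p - 1) = θ)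
    (hx0' : x 0 = x0)
    (E : ℝ → ℝ)
    (hE : ∀ t, E t = a t * (Φ (x t) - Φ xstar) + (1/2) * ‖v t - xstar‖ ^ 2) :
    ∀ t ∈ Set.Icc (0:ℝ) t0,
      DifferentiableAt ℝ E t ∧
      deriv E t ≤ -(a t * θ ^ (1/(p:ℝ)) * ‖gradient Φ (x t)‖ ^ (((p:ℝ)+1)/(p:ℝ))) := by
  intro τ hτ
  have hΦ : Differentiable ℝ Φ := hsmooth.differentiable (by norm_num)
  rw [show E = _ from funext hE]
  by_cases hG : gradient Φ (x τ) = 0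
  · have hτ₀ : τ ∈ Ioc 0 t0 :=
      ⟨hτ.1.lt_of_ne (by rintro rfl; exact hx0 (hx0' ▸ hG)), hτ.2⟩
    have hmin : Φ (x τ) = Φ xstar :=
      le_antisymm (hconv.le_of_gradient_eq_zero (hΦ _) hG xstar) (hstar _)
    have hv : HasDerivAt v 0 τ :=
      (hvdiff τ hτ).hasDerivAt.congr_deriv (by simpa [hG] using heqv τ hτ)
    have hE' := hasDerivAt_lyapunov_of_gradient_eq_zero
      (isBigO_one_of_eq_quarter_sq_integral ha hlamcont hτ₀) (hΦ _) hG hmin (hxdiff τ hτ) hv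
    refine ⟨hE'.differentiableAt, ?_⟩
    rw [hE'.deriv, hG, norm_zero, Real.zero_rpow (by positivity), mul_zero, neg_zero]
  · have ha' t (ht : t ∈ Icc 0 t0) :=
      hasDerivWithinAt_of_eq_quarter_sq_integral ha hlamcont hc.le ht
    have haτ : 0 < a τ := pos_of_eq_quarter_sq_integral ha hc hτ.1
    have hA : HasDerivAt a (Real.sqrt (lam τ * a τ)) τ :=
      hasDerivAt_of_deriv_add_deriv_smul_eq_zero ht0 hτ ha'
        ((hlamcont τ hτ).mul (ha' τ hτ).continuousWithinAt).sqrt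
        ((hsmooth.continuous_gradient (by norm_num)).continuousAt.comp
          (hxdiff τ hτ).continuousAt).continuousWithinAt
        hvdiff heqv hG (Real.sqrt_ne_zero'.2 (mul_pos (hlampos τ hτ) haτ))
    have hE' := hasDerivAt_lyapunov (xs := xstar) hA (hΦ _) (hxdiff τ hτ).hasDerivAt
      (hvdiff τ hτ).hasDerivAt
    refine ⟨hE'.differentiableAt, ?_⟩
    rw [hE'.deriv]
    calc _ ≤ -(Real.sqrt (lam τ * a τ) ^ 2 * ‖gradient Φ (x τ)‖ ^ 2) :=
          lyapunov_deriv_le (Real.sqrt_nonneg _) haτ.ne' (hA.deriv ▸ heqv τ hτ)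
            (hA.deriv ▸ heqx τ hτ) (hconv.sub_le_inner_gradient (hΦ _) xstar)
      _ = -(a τ * (lam τ * ‖gradient Φ (x τ)‖ ^ 2)) := by
          rw [Real.sq_sqrt (mul_pos (hlampos τ hτ) haτ).le]; ring
      _ = _ := by
          rw [mul_sq_eq_rpow_of_pow_mul_pow_eq hp (hlampos τ hτ) (norm_nonneg _) (halg τ hτ)]
          ring

/-- along a solution of the first-order system (FO) on `[0, t0]`, the
Lyapunov function `E(t) = a(t)(Φ(x(t)) − Φ(x*)) + ½‖v(t) − x*‖²` is differentiable and
satisfies `E'(t) ≤ −a(t) θ^{1/p} ‖∇Φ(x(t))‖^{(p+1)/p}`. -/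
theorem stmt_4 (d p : ℕ) (hd : 1 ≤ d) (hp : 1 ≤ p)
    (Φ : EuclideanSpace ℝ (Fin d) → ℝ)
    (hconv : ConvexOn ℝ Set.univ Φ) (hsmooth : ContDiff ℝ 2 Φ)
    (θ c t0 : ℝ) (hθ : θ ∈ Set.Ioo (0:ℝ) 1) (hc : 0 < c) (ht0 : 0 < t0)
    (x0 v0 xstar : EuclideanSpace ℝ (Fin d)) (hx0 : gradient Φ x0 ≠ 0)
    (hstar : ∀ y, Φ xstar ≤ Φ y)
    (x v : ℝ → EuclideanSpace ℝ (Fin d)) (lam : ℝ → ℝ) (a : ℝ → ℝ)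
    (hlamcont : ContinuousOn lam (Set.Icc 0 t0))
    (hlampos : ∀ t ∈ Set.Icc (0:ℝ) t0, 0 < lam t)
    (ha : ∀ t, a t = (1/4) * ((∫ s in (0:ℝ)..t, Real.sqrt (lam s)) + c) ^ 2)
    (hxdiff : ∀ t ∈ Set.Icc (0:ℝ) t0, DifferentiableAt ℝ x t)
    (hvdiff : ∀ t ∈ Set.Icc (0:ℝ) t0, DifferentiableAt ℝ v t)
    (heqv : ∀ t ∈ Set.Icc (0:ℝ) t0, deriv v t + deriv a t • gradient Φ (x t) = 0)
    (heqx : ∀ t ∈ Set.Icc (0:ℝ) t0,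
      deriv x t + (deriv a t / a t) • (x t - v t)
        + ((deriv a t) ^ 2 / a t) • gradient Φ (x t) = 0)
    (halg : ∀ t ∈ Set.Icc (0:ℝ) t0, (lam t) ^ p * ‖gradient Φ (x t)‖ ^ (p - 1) = θ)
    (hx0' : x 0 = x0) (hv0' : v 0 = v0)
    (E : ℝ → ℝ)
    (hE : ∀ t, E t = a t * (Φ (x t) - Φ xstar) + (1/2) * ‖v t - xstar‖ ^ 2) :
    ∀ t ∈ Set.Icc (0:ℝ) t0,
      DifferentiableAt ℝ E t ∧
      deriv E t ≤ -(a t * θ ^ (1/(p:ℝ)) * ‖gradient Φ (x t)‖ ^ (((p:ℝ)+1)/(p:ℝ))) :=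
  stmt_4_general d p hp Φ hconv hsmooth θ c t0 hc ht0 x0 xstar hx0 hstar x v lam a hlamcont hlampos
    ha hxdiff hvdiff heqv heqx halg hx0' E hE
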